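/- Let ω ∈ (0,1], r ∈ [0,1], m ∈ ℝⁿ, and P an n×n real positive definite matrix. Set κ := κ(ω,P), c := (1−r)^ω + r^ω · κ, and r_q := r^ω · κ / c. Then c > 0, r_q ∈ [0,1], (1−r)^ω = c·(1−r_q), and for every x ∈ ℝⁿ, (r · N(x; m, P))^ω = c · r_q · N(x; m, P/ω). That is, the ω-power of a Gaussian Bernoulli density with existence probability r and single-object density N(·; m, P) equals c times the Bernoulli density with existence probability r_q and single-object density N(·; m, P/ω). -/

import Mathlib

/-! The Gaussian factor carries the whole content: `N(x; m, P) ^ ω = κ(ω, P) · N(x; m, P / ω)`,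
because raising to the power `ω` scales the quadratic form in the exponent by `ω`, which is the
quadratic form of `P / ω`, and `κ(ω, P)` is exactly the ratio of the two normalising constants.
Given this, the Bernoulli statement is the normalisation of the two nonnegative weights
`(1 - r) ^ ω` and `r ^ ω · κ` by their sum `c`, which is positive since `κ > 0`
and `r`, `1 - r` do not both vanish. -/

open MeasureTheory Matrix

/-- Multivariate Gaussian density `N(x; m, P)` on ℝⁿ. -/
noncomputable def gaussianPDF {n : ℕ} (m : Fin n → ℝ) (P : Matrix (Fin n) (Fin n) ℝ)
    (x : Fin n → ℝ) : ℝ :=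
  ((2 * Real.pi) ^ n * P.det) ^ (-(1 : ℝ) / 2) *
    Real.exp (-(1 / 2 : ℝ) * ((x - m) ⬝ᵥ (P⁻¹ *ᵥ (x - m))))

/-- The constant `κ(ω, P)`, the total mass of the ω-power of a Gaussian density. -/
noncomputable def kappa {n : ℕ} (ω : ℝ) (P : Matrix (Fin n) (Fin n) ℝ) : ℝ :=
  ((2 * Real.pi / ω) ^ n * P.det) ^ ((1 : ℝ) / 2) /
    ((2 * Real.pi) ^ n * P.det) ^ (ω / 2)

open Real

theorem Matrix.inv_inv_smul {ι K : Type*} [Fintype ι] [DecidableEq ι] [Field K] {ω : K}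
    (hω : ω ≠ 0) {P : Matrix ι ι K} (hP : IsUnit P.det) : (ω⁻¹ • P)⁻¹ = ω • P⁻¹ := by
  simpa [Units.smul_def] using inv_smul' P (Units.mk0 ω hω)⁻¹ hP

theorem gaussianPDF_pos {n : ℕ} (m : Fin n → ℝ) {P : Matrix (Fin n) (Fin n) ℝ} (hP : 0 < P.det)
    (x : Fin n → ℝ) : 0 < gaussianPDF m P x := by
  unfold gaussianPDF
  positivity

theorem kappa_pos {n : ℕ} {ω : ℝ} (hω : 0 < ω) {P : Matrix (Fin n) (Fin n) ℝ} (hP : 0 < P.det) :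
    0 < kappa ω P := by
  unfold kappa
  positivity

theorem gaussianPDF_rpow {n : ℕ} {ω : ℝ} (hω : 0 < ω) (m : Fin n → ℝ)
    {P : Matrix (Fin n) (Fin n) ℝ} (hP : 0 < P.det) (x : Fin n → ℝ) :
    gaussianPDF m P x ^ ω = kappa ω P * gaussianPDF m (ω⁻¹ • P) x := by
  have hA : 0 < (2 * π) ^ n * P.det := by positivity
  have hB : 0 < (2 * π / ω) ^ n * P.det := by positivity
  have hdet_smul : (2 * π) ^ n * (ω⁻¹ • P).det = (2 * π / ω) ^ n * P.det := by
    rw [det_smul, Fintype.card_fin, div_eq_mul_inv, mul_pow]; ring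
  have hquad : (x - m) ⬝ᵥ ((ω⁻¹ • P)⁻¹ *ᵥ (x - m)) = ω * ((x - m) ⬝ᵥ (P⁻¹ *ᵥ (x - m))) := by
    rw [inv_inv_smul hω.ne' hP.ne'.isUnit, smul_mulVec, dotProduct_smul, smul_eq_mul]
  rw [gaussianPDF, gaussianPDF, kappa, hdet_smul, hquad,
    mul_rpow (rpow_nonneg hA.le _) (exp_nonneg _), ← rpow_mul hA.le, ← exp_mul]
  generalize (x - m) ⬝ᵥ (P⁻¹ *ᵥ (x - m)) = t
  generalize (2 * π) ^ n * P.det = A at hA ⊢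
  generalize (2 * π / ω) ^ n * P.det = B at hB ⊢
  have hB_half : B ^ ((1 : ℝ) / 2) * B ^ (-(1 : ℝ) / 2) = 1 := by
    rw [← rpow_add hB]; norm_num
  rw [show -(1 / 2 : ℝ) * t * ω = -(1 / 2) * (ω * t) by ring,
    show -(1 : ℝ) / 2 * ω = -(ω / 2) by ring, rpow_neg hA.le]
  linear_combination -(A ^ (ω / 2))⁻¹ * exp (-(1 / 2) * (ω * t)) * hB_half

/-- The ω-power of a Gaussian Bernoulli density with existence probability `r` and
single-object density `N(·; m, P)` equals `c` times the Bernoulli density with existence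
probability `rq` and single-object density `N(·; m, P/ω)`. -/
theorem power_gaussian_bernoulli {n : ℕ} (ω : ℝ) (hω : ω ∈ Set.Ioc (0 : ℝ) 1)
    (r : ℝ) (hr : r ∈ Set.Icc (0 : ℝ) 1)
    (m : Fin n → ℝ) (P : Matrix (Fin n) (Fin n) ℝ) (hP : P.PosDef)
    (κ c rq : ℝ)
    (hκ : κ = kappa ω P)
    (hc : c = (1 - r) ^ ω + r ^ ω * κ)
    (hrq : rq = r ^ ω * κ / c) :
    0 < c ∧
    rq ∈ Set.Icc (0 : ℝ) 1 ∧
    (1 - r) ^ ω = c * (1 - rq) ∧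
    ∀ x, (r * gaussianPDF m P x) ^ ω = c * rq * gaussianPDF m (ω⁻¹ • P) x := by
  have hκ_pos : 0 < κ := hκ ▸ kappa_pos hω.1 hP.det_pos
  have hmiss_nonneg : 0 ≤ (1 - r) ^ ω := rpow_nonneg (sub_nonneg.2 hr.2) ω
  have hc_pos : 0 < c := by
    rcases hr.1.eq_or_lt with rfl | hr_pos
    · simp [hc, zero_rpow hω.1.ne']
    · rw [hc]; exact add_pos_of_nonneg_of_pos hmiss_nonneg (by positivity)
  have hcrq : c * rq = r ^ ω * κ := by rw [hrq, mul_div_cancel₀ _ hc_pos.ne']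
  refine ⟨hc_pos, ⟨?_, ?_⟩, by linear_combination hcrq - hc, fun x ↦ ?_⟩
  · rw [hrq]; have := hr.1; positivity
  · rw [hrq, div_le_one hc_pos]; linarith
  · rw [mul_rpow hr.1 (gaussianPDF_pos m hP.det_pos x).le, gaussianPDF_rpow hω.1 m hP.det_pos, hcrq, hκ]
    ring
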